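/- Let φ₁,…,φₙ: [0,∞) → ℝ be C¹, increasing, and concave, and let B, R > 0 with φᵢ'(B/R) > 0 for all i. Set Rᵢ = R·φᵢ'(B/R)/(Σⱼ φⱼ'(B/R)). Then for every B₁,…,Bₙ ≥ 0 with Σᵢ Bᵢ = B, we have Σᵢ φᵢ(Bᵢ/Rᵢ) ≤ Σᵢ φᵢ(B/R). -/

import Mathlib

open Set

/-!
A concave function lies below its tangent line at `B / R`, so
`φᵢ(Bᵢ/Rᵢ) ≤ φᵢ(B/R) + φᵢ'(B/R) (Bᵢ/Rᵢ - B/R)`. Since `Rᵢ` is proportional to `φᵢ'(B/R)`,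
the correction `φᵢ'(B/R) · Bᵢ/Rᵢ` equals `Bᵢ · (Σⱼ φⱼ'(B/R)) / R`, and summing over `i`
the corrections cancel against `Σᵢ φᵢ'(B/R) · B/R`.
-/

lemma ConcaveOn.le_add_mul_sub_of_hasDerivAt {S : Set ℝ} {f : ℝ → ℝ} {f' x y : ℝ}
    (hf : ConcaveOn ℝ S f) (hx : x ∈ S) (hy : y ∈ S) (hf' : HasDerivAt f f' x) :
    f y ≤ f x + f' * (y - x) := by
  rcases lt_trichotomy y x with hyx | rfl | hxy
  · have hslope := hf.le_slope_of_hasDerivAt hy hx hyx hf'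
    rw [slope_def_field, le_div_iff₀ (sub_pos.2 hyx)] at hslope
    linarith
  · simp
  · have hslope := hf.slope_le_of_hasDerivAt hx hy hxy hf'
    rw [slope_def_field, div_le_iff₀ (sub_pos.2 hxy)] at hslope
    linarith

lemma Finset.sum_mul_div_proportional_sub_eq_zero {ι : Type*} (s : Finset ι) (w b : ι → ℝ)
    (R : ℝ) (hw : ∀ i ∈ s, w i ≠ 0) :
    ∑ i ∈ s, w i * (b i / (R * w i / ∑ j ∈ s, w j) - (∑ j ∈ s, b j) / R) = 0 := by
  have hterm : ∀ i ∈ s, w i * (b i / (R * w i / ∑ j ∈ s, w j) - (∑ j ∈ s, b j) / R)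
      = b i * (∑ j ∈ s, w j) / R - w i * ((∑ j ∈ s, b j) / R) := by
    intro i hi
    have hwi := hw i hi
    field_simp
  rw [Finset.sum_congr rfl hterm, Finset.sum_sub_distrib, ← Finset.sum_div, ← Finset.sum_mul,
    ← Finset.sum_mul]
  ring

theorem stmt_13 (n : ℕ) (φ : Fin n → ℝ → ℝ)
    (hconc : ∀ i, ConcaveOn ℝ (Ici 0) (φ i))
    (B R : ℝ) (hB : 0 < B) (hR : 0 < R)
    (hpos : ∀ i, 0 < deriv (φ i) (B / R))
    (Ri : Fin n → ℝ)
    (hRi : ∀ i, Ri i = R * deriv (φ i) (B / R) / (∑ j, deriv (φ j) (B / R)))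
    (Bi : Fin n → ℝ) (hBi : ∀ i, 0 ≤ Bi i) (hsum : ∑ i, Bi i = B) :
    ∑ i, φ i (Bi i / Ri i) ≤ ∑ i, φ i (B / R) := by
  set d : Fin n → ℝ := fun i => deriv (φ i) (B / R)
  have hRi_pos : ∀ i, 0 < Ri i := fun i => by
    rw [hRi i]
    exact div_pos (mul_pos hR (hpos i))
      (Finset.sum_pos (fun j _ => hpos j) ⟨i, Finset.mem_univ i⟩)
  have htangent : ∀ i, φ i (Bi i / Ri i) ≤ φ i (B / R) + d i * (Bi i / Ri i - B / R) :=
    fun i => (hconc i).le_add_mul_sub_of_hasDerivAt (div_pos hB hR).le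
      (div_nonneg (hBi i) (hRi_pos i).le)
      -- `deriv` is junk `0` at points of non-differentiability
      (differentiableAt_of_deriv_ne_zero (hpos i).ne').hasDerivAt
  have hcorrection : ∑ i, d i * (Bi i / Ri i - B / R) = 0 := by
    have hcancel := Finset.sum_mul_div_proportional_sub_eq_zero Finset.univ d Bi R
      fun i _ => (hpos i).ne'
    rw [hsum] at hcancel
    simpa only [hRi] using hcancel
  calc ∑ i, φ i (Bi i / Ri i)
      ≤ ∑ i, (φ i (B / R) + d i * (Bi i / Ri i - B / R)) :=
        Finset.sum_le_sum fun i _ => htangent i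
    _ = ∑ i, φ i (B / R) := by rw [Finset.sum_add_distrib, hcorrection, add_zero]
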